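/- Let D ⊆ {±1}^K be a finite dictionary, Γ ~ N(μ m, σ² I_K) with true message m ∈ D, μ > 0, σ > 0. Let m̂ = argmax_{m' ∈ D} ⟨m', Γ⟩. Let d_min = min over distinct pairs m', m'' ∈ D of the Hamming distance d_H(m', m''). Then the probability of exact decoding satisfies P(m̂ = m) ≥ 1 - (|D| - 1) Φ(-(μ/σ)√(d_min)), and consequently the expected bit accuracy E[(1/K)∑_k 1{m̂_k = m_k}] ≥ 1 - (|D| - 1) Φ(-(μ/σ)√(d_min)). -/

import Mathlib

open MeasureTheory ProbabilityTheory Real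

/-- Euclidean inner product on `Fin n → ℝ`. -/
noncomputable def dotp {n : ℕ} (x y : Fin n → ℝ) : ℝ := ∑ i, x i * y i

/-- Hamming distance between two vectors. -/
noncomputable def dH {K : ℕ} (a b : Fin K → ℝ) : ℕ :=
  (Finset.univ.filter fun k => a k ≠ b k).card

/-- The standard normal CDF. -/
noncomputable def Phi (x : ℝ) : ℝ :=
  ∫ t in Set.Iic x, (Real.sqrt (2 * Real.pi))⁻¹ * Real.exp (-(t ^ 2) / 2)

/-!
The decoder returns `m` whenever `m` beats every other codeword strictly. For `a ≠ m` the
statistic `⟨m - a, Γ⟩` is Gaussian with mean `2μ d_H(m, a)` and variance `4σ² d_H(m, a)`, so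
`P(⟨m, Γ⟩ ≤ ⟨a, Γ⟩) = Φ(-(μ/σ)√d_H(m, a)) ≤ Φ(-(μ/σ)√d_min)`, and a union bound over the
`|D| - 1` competitors bounds the failure probability. Ties between codewords have probability
zero, so the decoder agrees almost everywhere with a measurable map; the bit accuracy is `1`
on the success event, hence its expectation obeys the same bound.
-/

open NNReal Set

lemma charFun_prod_gaussianReal {ι : Type*} [Fintype ι] (m : ι → ℝ) (v : ι → ℝ≥0) :
    ∏ i, charFun (gaussianReal (m i) (v i)) = charFun (gaussianReal (∑ i, m i) (∑ i, v i)) := by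
  ext t
  simp only [Finset.prod_apply, charFun_gaussianReal, ← Complex.exp_sum]
  push_cast
  rw [Finset.sum_sub_distrib, ← Finset.sum_mul, ← Finset.mul_sum, ← Finset.sum_div,
    ← Finset.sum_mul]

lemma map_pi_gaussianReal_sum_mul {ι : Type*} [Fintype ι] (c m : ι → ℝ) (v : ι → ℝ≥0) :
    (Measure.pi fun i => gaussianReal (m i) (v i)).map (fun x => ∑ i, c i * x i)
      = gaussianReal (∑ i, c i * m i) (∑ i, NNReal.mk (c i ^ 2) (sq_nonneg _) * v i) := by
  apply Measure.ext_of_charFun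
  have hindep := iIndepFun_pi (μ := fun i => gaussianReal (m i) (v i))
    (X := fun i (y : ℝ) => c i * y) fun i => by fun_prop
  rw [hindep.charFun_map_fun_sum_eq_prod
      fun i => ((measurable_pi_apply i).const_mul (c i)).aemeasurable,
    ← charFun_prod_gaussianReal]
  congr! 1 with i
  rw [← gaussianReal_map_const_mul, ←
    (measurePreserving_eval (fun i => gaussianReal (m i) (v i)) i).map_eq,
    Measure.map_map (by fun_prop) (by fun_prop)]
  rfl

lemma sum_nnreal_sq_mul_ne_zero {ι : Type*} [Fintype ι] {c : ι → ℝ} (hc : c ≠ 0) {v : ℝ≥0}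
    (hv : v ≠ 0) : ∑ i, NNReal.mk (c i ^ 2) (sq_nonneg _) * v ≠ 0 := by
  obtain ⟨i, hi⟩ := Function.ne_iff.mp hc
  refine (Finset.sum_pos' (fun _ _ => zero_le) ⟨i, Finset.mem_univ _, ?_⟩).ne'
  exact mul_pos (NNReal.coe_pos.mp (pow_two_pos_of_ne_zero hi)) (pos_iff_ne_zero.mpr hv)

lemma pi_gaussianReal_sum_mul_eq_null {ι : Type*} [Fintype ι] {c : ι → ℝ} (hc : c ≠ 0)
    (m : ι → ℝ) {v : ℝ≥0} (hv : v ≠ 0) (t : ℝ) :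
    (Measure.pi fun i => gaussianReal (m i) v) {x | ∑ i, c i * x i = t} = 0 := by
  change (Measure.pi fun i => gaussianReal (m i) v) ((fun x => ∑ i, c i * x i) ⁻¹' {t}) = 0
  rw [← Measure.map_apply (by fun_prop) (measurableSet_singleton t),
    map_pi_gaussianReal_sum_mul]
  exact gaussianReal_absolutelyContinuous _ (sum_nnreal_sq_mul_ne_zero hc hv)
    (measure_singleton t)

lemma Phi_eq_gaussianReal_real_Iic (x : ℝ) : Phi x = (gaussianReal 0 1).real (Iic x) := by
  rw [measureReal_def, gaussianReal_apply_eq_integral _ one_ne_zero,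
    ENNReal.toReal_ofReal (integral_nonneg fun _ => gaussianPDFReal_nonneg _ _ _)]
  simp [Phi, gaussianPDFReal]

lemma Phi_mono : Monotone Phi := fun x y hxy => by
  simp only [Phi_eq_gaussianReal_real_Iic]
  exact measureReal_mono (Iic_subset_Iic.mpr hxy)

lemma gaussianReal_map_standardize {M : ℝ} {v : ℝ≥0} (hv : v ≠ 0) :
    (gaussianReal M v).map (fun y => (y - M) / √v) = gaussianReal 0 1 := by
  have : (fun y => (y - M) / √v) = (· / √v) ∘ (· - M) := rfl
  rw [this, ← Measure.map_map (by fun_prop) (by fun_prop), gaussianReal_map_sub_const,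
    gaussianReal_map_div_const, sub_self, zero_div]
  congr
  ext
  simp [Real.sq_sqrt v.coe_nonneg, hv]

lemma gaussianReal_real_Iic {M : ℝ} {v : ℝ≥0} (hv : v ≠ 0) (x : ℝ) :
    (gaussianReal M v).real (Iic x) = Phi ((x - M) / √v) := by
  have hsv : 0 < √(v : ℝ) := Real.sqrt_pos.mpr (by positivity)
  rw [Phi_eq_gaussianReal_real_Iic, ← gaussianReal_map_standardize (M := M) hv,
    map_measureReal_apply (by fun_prop) measurableSet_Iic]
  congr 1
  ext y
  simp [div_le_div_iff_of_pos_right hsv]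

section SignVector

variable {K : ℕ} {a b : Fin K → ℝ}

lemma sum_sub_mul_self_eq_dH (ha : ∀ k, a k = 1 ∨ a k = -1) (hb : ∀ k, b k = 1 ∨ b k = -1) :
    ∑ k, (a k - b k) * a k = 2 * dH a b := by
  have hk : ∀ k, (a k - b k) * a k = if a k ≠ b k then 2 else 0 := fun k => by
    rcases ha k with h | h <;> rcases hb k with h' | h' <;> norm_num [h, h']
  simp only [hk, ← Finset.sum_filter, Finset.sum_const, nsmul_eq_mul, dH, mul_comm]

lemma sum_sub_sq_eq_dH (ha : ∀ k, a k = 1 ∨ a k = -1) (hb : ∀ k, b k = 1 ∨ b k = -1) :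
    ∑ k, (a k - b k) ^ 2 = 4 * dH a b := by
  have hk : ∀ k, (a k - b k) ^ 2 = if a k ≠ b k then 4 else 0 := fun k => by
    rcases ha k with h | h <;> rcases hb k with h' | h' <;> norm_num [h, h']
  simp only [hk, ← Finset.sum_filter, Finset.sum_const, nsmul_eq_mul, dH, mul_comm]

lemma dH_pos (hab : a ≠ b) : 0 < dH a b := by
  obtain ⟨k, hk⟩ := Function.ne_iff.mp hab
  exact Finset.card_pos.mpr ⟨k, Finset.mem_filter.mpr ⟨Finset.mem_univ k, hk⟩⟩

end SignVector

lemma dotp_sub_dotp {K : ℕ} (a b γ : Fin K → ℝ) :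
    dotp a γ - dotp b γ = ∑ k, (a k - b k) * γ k := by
  simp only [dotp, sub_mul, Finset.sum_sub_distrib]

lemma pi_gaussianReal_real_dotp_le {K : ℕ} (μ : ℝ) {v : ℝ≥0} (hv : v ≠ 0) {m a : Fin K → ℝ}
    (hm : ∀ k, m k = 1 ∨ m k = -1) (ha : ∀ k, a k = 1 ∨ a k = -1) (hma : m ≠ a) :
    (Measure.pi fun k => gaussianReal (μ * m k) v).real {γ | dotp m γ ≤ dotp a γ}
      = Phi (-(μ / √v) * √(dH m a)) := by
  have hd : (0 : ℝ) < dH m a := by exact_mod_cast dH_pos hma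
  have hset : {γ | dotp m γ ≤ dotp a γ} = (fun γ => ∑ k, (m k - a k) * γ k) ⁻¹' Iic 0 := by
    ext γ
    simp [← dotp_sub_dotp]
  rw [hset, ← map_measureReal_apply (by fun_prop) measurableSet_Iic,
    map_pi_gaussianReal_sum_mul, gaussianReal_real_Iic (sum_nnreal_sq_mul_ne_zero
      (c := fun k => m k - a k) (sub_ne_zero.mpr hma) hv)]
  congr 1
  have hmean : ∑ k, (m k - a k) * (μ * m k) = 2 * μ * dH m a := by
    simp_rw [mul_left_comm _ μ, ← Finset.mul_sum, sum_sub_mul_self_eq_dH hm ha]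
    ring
  have hvar : ((∑ k, NNReal.mk ((m k - a k) ^ 2) (sq_nonneg _) * v : ℝ≥0) : ℝ)
      = (2 * √(dH m a)) ^ 2 * v := by
    push_cast
    rw [← Finset.sum_mul, sum_sub_sq_eq_dH hm ha, mul_pow, Real.sq_sqrt hd.le]
    ring
  rw [hmean, hvar, Real.sqrt_mul (by positivity), Real.sqrt_sq (by positivity)]
  field_simp
  rw [Real.sq_sqrt hd.le]
  ring

lemma pi_gaussianReal_dotp_eq_dotp {K : ℕ} (w : Fin K → ℝ) {v : ℝ≥0} (hv : v ≠ 0)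
    {a b : Fin K → ℝ} (hab : a ≠ b) :
    (Measure.pi fun k => gaussianReal (w k) v) {γ | dotp a γ = dotp b γ} = 0 := by
  simp_rw [← sub_eq_zero (a := dotp a _), dotp_sub_dotp]
  exact pi_gaussianReal_sum_mul_eq_null (c := fun k => a k - b k) (sub_ne_zero.mpr hab) w hv 0

section Decoder

def decisionRegion {K : ℕ} (𝒟 : Finset (Fin K → ℝ)) (a : Fin K → ℝ) : Set (Fin K → ℝ) :=
  {γ | ∀ b ∈ 𝒟, b ≠ a → dotp b γ < dotp a γ}

lemma measurable_dotp {K : ℕ} (a : Fin K → ℝ) : Measurable (dotp a) := by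
  unfold dotp
  fun_prop

lemma measurableSet_decisionRegion {K : ℕ} (𝒟 : Finset (Fin K → ℝ)) (a : Fin K → ℝ) :
    MeasurableSet (decisionRegion 𝒟 a) := by
  simp only [decisionRegion, Set.ofPred_forall]
  exact Finset.measurableSet_biInter _ fun b _ =>
    .iInter fun _ => measurableSet_lt (measurable_dotp b) (measurable_dotp a)

lemma measureReal_compl_decisionRegion_le {K : ℕ} (P : Measure (Fin K → ℝ)) [IsFiniteMeasure P]
    (𝒟 : Finset (Fin K → ℝ)) (m : Fin K → ℝ) :
    P.real (decisionRegion 𝒟 m)ᶜ ≤ ∑ a ∈ 𝒟.erase m, P.real {γ | dotp m γ ≤ dotp a γ} := by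
  refine (measureReal_mono ?_ (measure_ne_top _ _)).trans (measureReal_biUnion_finset_le _ _)
  intro γ hγ
  simp only [decisionRegion, Set.mem_compl_iff, Set.mem_ofPred_eq, not_forall, not_lt] at hγ
  obtain ⟨a, ha, ham, hle⟩ := hγ
  exact Set.mem_biUnion (Finset.mem_erase.mpr ⟨ham, ha⟩) hle

variable {K : ℕ} {𝒟 : Finset (Fin K → ℝ)} {dec : (Fin K → ℝ) → (Fin K → ℝ)}
  (hdec_mem : ∀ γ, dec γ ∈ 𝒟) (hdec_max : ∀ γ, ∀ a ∈ 𝒟, dotp a γ ≤ dotp (dec γ) γ)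
include hdec_mem hdec_max

lemma dec_eq_of_mem_decisionRegion {a γ : Fin K → ℝ} (ha : a ∈ 𝒟)
    (hγ : γ ∈ decisionRegion 𝒟 a) : dec γ = a := by
  by_contra hne
  exact (hγ _ (hdec_mem γ) hne).not_ge (hdec_max γ a ha)

lemma ae_mem_decisionRegion_dec {P : Measure (Fin K → ℝ)}
    (hties : ∀ a ∈ 𝒟, ∀ b ∈ 𝒟, a ≠ b → P {γ | dotp a γ = dotp b γ} = 0) :
    ∀ᵐ γ ∂P, γ ∈ decisionRegion 𝒟 (dec γ) := by
  have hnoTie : ∀ᵐ γ ∂P, ∀ a ∈ 𝒟, ∀ b ∈ 𝒟, a ≠ b → dotp a γ ≠ dotp b γ := by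
    simp only [Filter.eventually_all_finset, Filter.eventually_imp_distrib_left]
    exact fun a ha b hb hab => measure_eq_zero_iff_ae_notMem.mp (hties a ha b hb hab)
  filter_upwards [hnoTie] with γ hγ b hb hne
  exact (hdec_max γ b hb).lt_of_ne (hγ b hb _ (hdec_mem γ) hne)

lemma aemeasurable_dec {P : Measure (Fin K → ℝ)}
    (hties : ∀ a ∈ 𝒟, ∀ b ∈ 𝒟, a ≠ b → P {γ | dotp a γ = dotp b γ} = 0) :
    AEMeasurable dec P := by
  refine ⟨fun γ => ∑ a ∈ 𝒟, (decisionRegion 𝒟 a).indicator (fun _ => a) γ,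
    Finset.measurable_sum _ fun a _ =>
      measurable_const.indicator (measurableSet_decisionRegion 𝒟 a), ?_⟩
  filter_upwards [ae_mem_decisionRegion_dec hdec_mem hdec_max hties] with γ hγ
  rw [Finset.sum_eq_single_of_mem _ (hdec_mem γ), Set.indicator_of_mem hγ]
  intro a ha hne
  exact Set.indicator_of_notMem
    (fun hγa => hne (dec_eq_of_mem_decisionRegion hdec_mem hdec_max ha hγa).symm) _

end Decoder

noncomputable def bitAccuracy {K : ℕ} (m a : Fin K → ℝ) : ℝ :=
  (K : ℝ)⁻¹ * ∑ k, if a k = m k then 1 else 0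

section BitAccuracy

variable {K : ℕ} (m : Fin K → ℝ)

lemma measurable_bitAccuracy : Measurable (bitAccuracy m) := by
  unfold bitAccuracy
  exact (Finset.measurable_sum _ fun k _ => Measurable.ite
    (measurableSet_eq_fun (measurable_pi_apply k) measurable_const)
    measurable_const measurable_const).const_mul _

lemma bitAccuracy_nonneg (a : Fin K → ℝ) : 0 ≤ bitAccuracy m a := by
  unfold bitAccuracy
  positivity

lemma bitAccuracy_le_one (a : Fin K → ℝ) : bitAccuracy m a ≤ 1 := by
  unfold bitAccuracy
  rw [Finset.sum_boole]
  refine inv_mul_le_one_of_le₀ ?_ (Nat.cast_nonneg K)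
  exact_mod_cast (Finset.card_filter_le _ _).trans_eq (Finset.card_fin K)

lemma bitAccuracy_self (hK : 0 < K) : bitAccuracy m m = 1 := by
  simp [bitAccuracy, hK.ne']

end BitAccuracy

lemma one_sub_le_measureReal_decisionRegion {K : ℕ} {μ : ℝ} (hμ : 0 ≤ μ) {v : ℝ≥0}
    (hv : v ≠ 0) {𝒟 : Finset (Fin K → ℝ)} (h𝒟 : ∀ a ∈ 𝒟, ∀ k, a k = 1 ∨ a k = -1)
    {m : Fin K → ℝ} (hm : m ∈ 𝒟) {dmin : ℕ} (hdmin : ∀ a ∈ 𝒟, a ≠ m → dmin ≤ dH m a) :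
    1 - ((𝒟.card : ℝ) - 1) * Phi (-(μ / √v) * √dmin)
      ≤ (Measure.pi fun k => gaussianReal (μ * m k) v).real (decisionRegion 𝒟 m) := by
  set P := Measure.pi fun k => gaussianReal (μ * m k) v
  have hpair : ∀ a ∈ 𝒟.erase m,
      P.real {γ | dotp m γ ≤ dotp a γ} ≤ Phi (-(μ / √v) * √dmin) := by
    intro a ha
    obtain ⟨ham, haD⟩ := Finset.mem_erase.mp ha
    rw [pi_gaussianReal_real_dotp_le μ hv (h𝒟 m hm) (h𝒟 a haD) (Ne.symm ham)]
    refine Phi_mono (mul_le_mul_of_nonpos_left ?_ (neg_nonpos.mpr (by positivity)))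
    exact Real.sqrt_le_sqrt (by exact_mod_cast hdmin a haD ham)
  have hcompl := (measureReal_compl_decisionRegion_le P 𝒟 m).trans
    (Finset.sum_le_card_nsmul _ _ _ hpair)
  rw [probReal_compl_eq_one_sub (measurableSet_decisionRegion 𝒟 m),
    Finset.card_erase_of_mem hm, nsmul_eq_mul, Nat.cast_sub (Finset.card_pos.mpr ⟨m, hm⟩),
    Nat.cast_one] at hcompl
  linarith

lemma measureReal_decisionRegion_le_integral_bitAccuracy {K : ℕ} (hK : 0 < K)
    {𝒟 : Finset (Fin K → ℝ)} {dec : (Fin K → ℝ) → (Fin K → ℝ)} (hdec_mem : ∀ γ, dec γ ∈ 𝒟)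
    (hdec_max : ∀ γ, ∀ a ∈ 𝒟, dotp a γ ≤ dotp (dec γ) γ) {m : Fin K → ℝ} (hm : m ∈ 𝒟)
    {P : Measure (Fin K → ℝ)} [IsFiniteMeasure P]
    (hties : ∀ a ∈ 𝒟, ∀ b ∈ 𝒟, a ≠ b → P {γ | dotp a γ = dotp b γ} = 0) :
    P.real (decisionRegion 𝒟 m) ≤ ∫ γ, bitAccuracy m (dec γ) ∂P := by
  have hint : Integrable (fun γ => bitAccuracy m (dec γ)) P := by
    refine .of_bound ((measurable_bitAccuracy m).comp_aemeasurable
      (aemeasurable_dec hdec_mem hdec_max hties)).aestronglyMeasurable 1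
      (ae_of_all _ fun γ => ?_)
    rw [Real.norm_of_nonneg (bitAccuracy_nonneg m _)]
    exact bitAccuracy_le_one m _
  rw [← integral_indicator_one (measurableSet_decisionRegion 𝒟 m)]
  refine integral_mono_of_nonneg
    (ae_of_all _ fun γ => Set.indicator_nonneg (fun _ _ => zero_le_one) γ) hint
    (ae_of_all _ fun γ => ?_)
  by_cases hγ : γ ∈ decisionRegion 𝒟 m
  · simp only [Set.indicator_of_mem hγ, Pi.one_apply,
      dec_eq_of_mem_decisionRegion hdec_mem hdec_max hm hγ, bitAccuracy_self m hK, le_refl]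
  · rw [Set.indicator_of_notMem hγ]
    exact bitAccuracy_nonneg m _

theorem stmt6 {K : ℕ} (hK : 0 < K) (μ σ : ℝ) (hμ : 0 < μ) (hσ : 0 < σ)
    (𝒟 : Finset (Fin K → ℝ)) (h𝒟 : ∀ a ∈ 𝒟, ∀ k, a k = 1 ∨ a k = -1)
    (m : Fin K → ℝ) (hm : m ∈ 𝒟)
    (dmin : ℕ)
    (hdmin_le : ∀ a ∈ 𝒟, ∀ b ∈ 𝒟, a ≠ b → dmin ≤ dH a b)
    (dec : (Fin K → ℝ) → (Fin K → ℝ))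
    (hdec_mem : ∀ γ, dec γ ∈ 𝒟)
    (hdec_max : ∀ γ, ∀ a ∈ 𝒟, dotp a γ ≤ dotp (dec γ) γ)
    (P : Measure (Fin K → ℝ))
    (hP : P = Measure.pi fun k => gaussianReal (μ * m k) ⟨σ ^ 2, sq_nonneg σ⟩) :
    1 - ((𝒟.card : ℝ) - 1) * Phi (-(μ / σ) * Real.sqrt dmin) ≤
        (P {γ | dec γ = m}).toReal ∧
    1 - ((𝒟.card : ℝ) - 1) * Phi (-(μ / σ) * Real.sqrt dmin) ≤
        ∫ γ, (K : ℝ)⁻¹ * ∑ k : Fin K, (if dec γ k = m k then (1 : ℝ) else 0) ∂P := by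
  obtain ⟨v, hvσ, hP⟩ : ∃ v : ℝ≥0, (v : ℝ) = σ ^ 2 ∧
      P = Measure.pi fun k => gaussianReal (μ * m k) v := ⟨_, rfl, hP⟩
  have hv : v ≠ 0 := by
    rw [← NNReal.coe_ne_zero, hvσ]
    positivity
  have hbound := one_sub_le_measureReal_decisionRegion hμ.le hv h𝒟 hm
    fun a ha ham => hdmin_le m hm a ha (Ne.symm ham)
  rw [hvσ, Real.sqrt_sq hσ.le, ← hP] at hbound
  have hties : ∀ a ∈ 𝒟, ∀ b ∈ 𝒟, a ≠ b → P {γ | dotp a γ = dotp b γ} = 0 :=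
    fun a _ b _ hab => hP ▸ pi_gaussianReal_dotp_eq_dotp _ hv hab
  have : IsProbabilityMeasure P := hP ▸ inferInstance
  exact ⟨hbound.trans (measureReal_mono fun γ hγ =>
      dec_eq_of_mem_decisionRegion hdec_mem hdec_max hm hγ),
    hbound.trans
      (measureReal_decisionRegion_le_integral_bitAccuracy hK hdec_mem hdec_max hm hties)⟩
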